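/- arXiv:1701.01301 — 4 statements merged into one kernel-verified Lean document; each statement's English description precedes it below -/
import Mathlib

section
/- Let L be a frame (complete Heyting algebra) and γ a cardinal. If L satisfies the transfinite distributivity law at γ, then L satisfies the classical distributivity law at γ: for every family ψ : γ × γ → L one has inf_{i<γ} sup_{j<γ} ψ(i,j) ≤ sup over functions f : γ → γ of inf_{i<γ} ψ(i, f(i)). -/
/-- Restriction of `f : Iio β → Iio o` to `Iio α` for `α ≤ β`. -/
def resFn {o β α : Ordinal} (h : α ≤ β) (f : Set.Iio β → Set.Iio o) :
    Set.Iio α → Set.Iio o :=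
  fun x => f ⟨x.1, lt_of_lt_of_le x.2 h⟩

/-- The unique function `Iio 0 → Iio o`. -/
def emptyFn (o : Ordinal) : Set.Iio (0 : Ordinal) → Set.Iio o :=
  fun t => absurd t.2 (not_lt_of_ge (zero_le (a := t.1)))

lemma resFn_zero {o β : Ordinal} (h : (0 : Ordinal) ≤ β) (f : Set.Iio β → Set.Iio o) :
    resFn h f = emptyFn o :=
  funext fun t => absurd t.2 (not_lt_of_ge (zero_le (a := t.1)))

/-- The transfinite distributivity law at (the initial ordinal of) `o`, for a complete lattice. -/
def TransfiniteDistrib (L : Type*) [CompleteLattice L] (o : Ordinal) : Prop :=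
  ∀ (h0 : (0 : Ordinal) < o)
    (a : (β : Set.Iio o) → (Set.Iio β.1 → Set.Iio o) → L),
    (∀ (β : Ordinal) (hβ : β + 1 < o) (f : Set.Iio β → Set.Iio o),
        a ⟨β, Set.mem_Iio.mpr (lt_of_le_of_lt ((le_self_add : β ≤ β + 1)) hβ)⟩ f ≤
          ⨆ g : {g : Set.Iio (β + 1) → Set.Iio o // resFn ((le_self_add : β ≤ β + 1)) g = f},
            a ⟨β + 1, Set.mem_Iio.mpr hβ⟩ g.1) →
    (∀ (β : Set.Iio o), Order.IsSuccLimit β.1 → ∀ f : Set.Iio β.1 → Set.Iio o,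
        a β f = ⨅ α : Set.Iio β.1,
          a ⟨α.1, Set.mem_Iio.mpr (lt_trans α.2 β.2)⟩ (resFn (le_of_lt α.2) f)) →
    a ⟨0, Set.mem_Iio.mpr h0⟩ (emptyFn o) ≤
      ⨆ f : Set.Iio o → Set.Iio o, ⨅ β : Set.Iio o, a β (resFn (le_of_lt β.2) f)

/-!
Write `A = ⨅ i, ⨆ j, ψ (i, j)` and apply the transfinite law to the tree whose nodes at height
`β` are the partial choice functions `f : β → γ`, labelled by `A ⊓ ⨅ i < β, ψ (i, f i)`.
Since `A ≤ ⨆ j, ψ (β, j)`, frame distributivity covers each label by the labels of the one-point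
extensions of `f`; labels are continuous at limit heights; and the root is labelled `A`.
So `A` lies below the join, over full branches `f`, of the meets of the labels along `f`, which
bound `ψ (i, f i)` at every `i` with `i + 1 < γ`. When `γ` is a successor `s + 1` the last index
`s` lies on no proper initial segment, and one more use of distributivity chooses `f s`.
-/

open Set Order

lemma le_iSup_inf_of_le_iSup {L κ : Type*} [Order.Frame L] {x : L} {g : κ → L}
    (h : x ≤ ⨆ j, g j) : x ≤ ⨆ j, g j ⊓ x :=
  ((inf_eq_right.2 h).symm.trans (iSup_inf_eq _ _)).le

def ClassicalDistrib (L : Type*) [CompleteLattice L] (o : Ordinal) : Prop :=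
  ∀ ψ : Iio o × Iio o → L,
    ⨅ i : Iio o, ⨆ j : Iio o, ψ (i, j) ≤ ⨆ f : Iio o → Iio o, ⨅ i : Iio o, ψ (i, f i)

section snocFn

variable {o β : Ordinal}

noncomputable def snocFn (f : Iio β → Iio o) (j : Iio o) : Iio (β + 1) → Iio o :=
  fun x => if hx : x.1 < β then f ⟨x.1, hx⟩ else j

lemma snocFn_apply_of_lt (f : Iio β → Iio o) (j : Iio o) {x : Iio (β + 1)} (hx : x.1 < β) :
    snocFn f j x = f ⟨x.1, hx⟩ :=
  dif_pos hx

lemma snocFn_apply_of_not_lt (f : Iio β → Iio o) (j : Iio o) {x : Iio (β + 1)}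
    (hx : ¬x.1 < β) : snocFn f j x = j :=
  dif_neg hx

lemma resFn_snocFn (f : Iio β → Iio o) (j : Iio o) :
    resFn (le_self_add : β ≤ β + 1) (snocFn f j) = f :=
  funext fun x => snocFn_apply_of_lt f j (mem_Iio.1 x.2)

end snocFn

section branchInf

variable {L : Type*} [Order.Frame L] {o : Ordinal} (ψ : Iio o × Iio o → L)

def branchInf (β : Iio o) (f : Iio β.1 → Iio o) : L :=
  (⨅ i : Iio o, ⨆ j : Iio o, ψ (i, j)) ⊓
    ⨅ i : Iio β.1, ψ (⟨i.1, mem_Iio.2 (lt_trans i.2 β.2)⟩, f i)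

lemma branchInf_le_iInf_iSup (β : Iio o) (f : Iio β.1 → Iio o) :
    branchInf ψ β f ≤ ⨅ i : Iio o, ⨆ j : Iio o, ψ (i, j) :=
  inf_le_left

lemma branchInf_le_apply (β : Iio o) (f : Iio β.1 → Iio o) (i : Iio β.1) :
    branchInf ψ β f ≤ ψ (⟨i.1, mem_Iio.2 (lt_trans i.2 β.2)⟩, f i) :=
  inf_le_right.trans (iInf_le _ i)

lemma branchInf_zero (h0 : 0 < o) :
    branchInf ψ ⟨0, mem_Iio.2 h0⟩ (emptyFn o) = ⨅ i : Iio o, ⨆ j : Iio o, ψ (i, j) :=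
  inf_eq_left.2 (le_iInf fun i => absurd (mem_Iio.1 i.2) not_lt_zero)

lemma branchInf_le_iSup_snocFn (β : Ordinal) (hβ : β + 1 < o) (f : Iio β → Iio o) :
    branchInf ψ ⟨β, mem_Iio.2 (lt_of_le_of_lt le_self_add hβ)⟩ f ≤
      ⨆ g : {g : Iio (β + 1) → Iio o // resFn (le_self_add : β ≤ β + 1) g = f},
        branchInf ψ ⟨β + 1, mem_Iio.2 hβ⟩ g.1 := by
  have hβo : β < o := lt_of_le_of_lt le_self_add hβ
  have hA : branchInf ψ ⟨β, mem_Iio.2 hβo⟩ f ≤ ⨆ j, ψ (⟨β, mem_Iio.2 hβo⟩, j) :=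
    (branchInf_le_iInf_iSup ψ ⟨β, mem_Iio.2 hβo⟩ f).trans (iInf_le _ _)
  refine (le_iSup_inf_of_le_iSup hA).trans (iSup_le fun j => ?_)
  refine le_iSup_of_le ⟨snocFn f j, resFn_snocFn f j⟩ (le_inf ?_ (le_iInf fun i => ?_))
  · exact inf_le_right.trans (branchInf_le_iInf_iSup ψ ⟨β, mem_Iio.2 hβo⟩ f)
  obtain ⟨i, hi1⟩ := i
  dsimp only
  by_cases hi : i < β
  · rw [snocFn_apply_of_lt f j hi]
    exact inf_le_right.trans (branchInf_le_apply ψ ⟨β, mem_Iio.2 hβo⟩ f ⟨i, hi⟩)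
  · rw [snocFn_apply_of_not_lt f j hi]
    obtain rfl : i = β := le_antisymm (lt_add_one_iff.1 hi1) (not_lt.1 hi)
    exact inf_le_left

lemma branchInf_eq_iInf_of_isSuccLimit (β : Iio o) (hβ : IsSuccLimit β.1)
    (f : Iio β.1 → Iio o) :
    branchInf ψ β f =
      ⨅ α : Iio β.1, branchInf ψ ⟨α.1, mem_Iio.2 (lt_trans α.2 β.2)⟩ (resFn (le_of_lt α.2) f) := by
  refine le_antisymm
    (le_iInf fun α => le_inf (branchInf_le_iInf_iSup ψ β f) (le_iInf fun i => ?_)) ?_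
  · exact branchInf_le_apply ψ β f ⟨i.1, mem_Iio.2 (lt_trans i.2 α.2)⟩
  refine le_inf ((iInf_le _ ⟨0, mem_Iio.2 hβ.pos⟩).trans (branchInf_le_iInf_iSup ψ _ _))
    (le_iInf fun i => ?_)
  exact (iInf_le _ ⟨i.1 + 1, mem_Iio.2 (hβ.add_one_lt i.2)⟩).trans
    (branchInf_le_apply ψ _ _ ⟨i.1, mem_Iio.2 (lt_add_one _)⟩)

lemma iInf_branchInf_le (f : Iio o → Iio o) (i : Iio o) (hi : i.1 + 1 < o) :
    ⨅ β : Iio o, branchInf ψ β (resFn (le_of_lt β.2) f) ≤ ψ (i, f i) :=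
  (iInf_le _ ⟨i.1 + 1, mem_Iio.2 hi⟩).trans
    (branchInf_le_apply ψ _ _ ⟨i.1, mem_Iio.2 (lt_add_one _)⟩)

lemma iInf_branchInf_le_iSup_iInf (h0 : 0 < o) (f : Iio o → Iio o) :
    ⨅ β : Iio o, branchInf ψ β (resFn (le_of_lt β.2) f) ≤
      ⨆ f : Iio o → Iio o, ⨅ i : Iio o, ψ (i, f i) := by
  set X := ⨅ β : Iio o, branchInf ψ β (resFn (le_of_lt β.2) f)
  rcases Ordinal.zero_or_succ_or_isSuccLimit o with ho | ⟨s, rfl⟩ | ho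
  · exact absurd ho h0.ne'
  · have hs : s ∈ Iio (succ s) := lt_succ s
    have hX : X ≤ ⨆ j, ψ (⟨s, hs⟩, j) :=
      (iInf_le _ ⟨0, mem_Iio.2 h0⟩).trans ((branchInf_le_iInf_iSup ψ _ _).trans (iInf_le _ _))
    refine (le_iSup_inf_of_le_iSup hX).trans (iSup_le fun j => ?_)
    refine le_iSup_of_le (Function.update f ⟨s, hs⟩ j) (le_iInf fun i => ?_)
    rcases eq_or_ne i ⟨s, hs⟩ with rfl | hne
    · rw [Function.update_self]
      exact inf_le_left
    · rw [Function.update_of_ne hne]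
      have his : i.1 < s := (lt_succ_iff.1 i.2).lt_of_ne fun h => hne (Subtype.ext h)
      refine inf_le_right.trans (iInf_branchInf_le ψ f i ?_)
      rw [← succ_eq_add_one]
      exact succ_lt_succ his
  · exact le_iSup_of_le f (le_iInf fun i => iInf_branchInf_le ψ f i (ho.add_one_lt i.2))

end branchInf

theorem TransfiniteDistrib.classicalDistrib {L : Type*} [Order.Frame L] {o : Ordinal}
    (h : TransfiniteDistrib L o) : ClassicalDistrib L o := by
  intro ψ
  rcases eq_zero_or_pos o with rfl | h0
  · exact le_iSup_of_le id (le_iInf fun i => absurd (mem_Iio.1 i.2) not_lt_zero)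
  · calc ⨅ i : Iio o, ⨆ j : Iio o, ψ (i, j) = branchInf ψ ⟨0, mem_Iio.2 h0⟩ (emptyFn o) :=
          (branchInf_zero ψ h0).symm
      _ ≤ ⨆ f : Iio o → Iio o, ⨅ β : Iio o, branchInf ψ β (resFn (le_of_lt β.2) f) :=
          h h0 _ (branchInf_le_iSup_snocFn ψ) (branchInf_eq_iInf_of_isSuccLimit ψ)
      _ ≤ ⨆ f : Iio o → Iio o, ⨅ i : Iio o, ψ (i, f i) :=
          iSup_le (iInf_branchInf_le_iSup_iInf ψ h0)

/-- If a frame satisfies the transfinite distributivity law at a cardinal `γ`, then it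
satisfies the classical distributivity law at `γ`. -/
theorem frame_transfiniteDistrib_implies_classical_distrib
    (L : Type*) [Order.Frame L] (γ : Cardinal)
    (h : TransfiniteDistrib L γ.ord)
    (ψ : ↥(Set.Iio γ.ord) × ↥(Set.Iio γ.ord) → L) :
    ⨅ i : Set.Iio γ.ord, ⨆ j : Set.Iio γ.ord, ψ (i, j) ≤
      ⨆ f : (↥(Set.Iio γ.ord) → ↥(Set.Iio γ.ord)), ⨅ i : Set.Iio γ.ord, ψ (i, f i) :=
  h.classicalDistrib ψ
end

section
/- The complete lattice [0,1] does not satisfy the transfinite distributivity law at γ = ω₁: there exists a family of elements a_f ∈ [0,1], indexed by functions f : β → ω₁ for ordinals β < ω₁, such that a_f ≤ sup{a_g : g : β+1 → ω₁, g restricts to f} for every β < ω₁ and f : β → ω₁, and a_f = inf{a_{f|α} : α < β} for every limit ordinal β < ω₁ and f : β → ω₁, and yet a_∅ is NOT ≤ the supremum over functions f : ω₁ → ω₁ of inf over β < ω₁ of a_{f|β}. -/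
instance : Fact ((0:ℝ) ≤ 1) := ⟨zero_le_one⟩

/-- The first uncountable ordinal `ω₁`, the initial ordinal of `ℵ₁`. -/
noncomputable def omega1 : Ordinal := (Cardinal.aleph 1).ord

lemma omega1_pos : (0 : Ordinal) < omega1 := by
  rw [omega1, ← Cardinal.ord_zero]
  exact Cardinal.ord_lt_ord.mpr (Cardinal.aleph_pos 1)


/-!
Weight the node `f : β → ω₁` by the "infinite product" `a_f = ∏_{δ < β} w (f δ)`, read as the
infimum of its finite partial products, where `w` takes the values `n / (n + 2) < 1`, the value
`w n` being attained at the finite ordinal `n`. Limit nodes are then infima of their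
restrictions, because every finite set of ordinals below a limit `β` is bounded below `β`, and
`a_f ≤ sup_n w n · a_f` bounds a node by the supremum of its successors. The root has value `1`,
but along any branch `f : ω₁ → ω₁` one of the countably many weights occurs infinitely often,
so the branch product is `0`.
-/

open Set Function Filter Topology unitInterval

noncomputable section

namespace unitInterval

variable {ι κ : Type*}

def infProd (x : ι → I) : I := ⨅ S : Finset ι, ∏ i ∈ S, x i

theorem infProd_le_prod (x : ι → I) (S : Finset ι) : infProd x ≤ ∏ i ∈ S, x i :=
  iInf_le _ S

theorem infProd_of_isEmpty [IsEmpty ι] (x : ι → I) : infProd x = 1 := by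
  simp [infProd, Subsingleton.elim _ (∅ : Finset ι)]

theorem infProd_le_infProd_comp (x : ι → I) {e : κ → ι} (he : Injective e) :
    infProd x ≤ infProd (x ∘ e) :=
  le_iInf fun S => (infProd_le_prod x (S.map ⟨e, he⟩)).trans_eq (Finset.prod_map _ _ _)

theorem infProd_comp_le_prod (x : ι → I) {e : κ → ι} (he : Injective e) {S : Finset ι}
    (hS : ∀ i ∈ S, i ∈ range e) : infProd (x ∘ e) ≤ ∏ i ∈ S, x i :=
  (infProd_le_prod _ (S.preimage e he.injOn)).trans_eq
    (Finset.prod_preimage e S he.injOn x fun i hi hne => absurd (hS i hi) hne)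

theorem iInf_infProd_comp {J : Sort*} {κ : J → Type*} (x : ι → I) {e : ∀ j, κ j → ι}
    (he : ∀ j, Injective (e j)) (hcover : ∀ S : Finset ι, ∃ j, ∀ i ∈ S, i ∈ range (e j)) :
    ⨅ j, infProd (x ∘ e j) = infProd x := by
  refine le_antisymm (le_iInf fun S => ?_) (le_iInf fun j => infProd_le_infProd_comp x (he j))
  obtain ⟨j, hj⟩ := hcover S
  exact (iInf_le _ j).trans (infProd_comp_le_prod x (he j) hj)

theorem mul_infProd_comp_le (x : ι → I) {e : κ → ι} (he : Injective e) {i₀ : ι}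
    (hrange : ∀ i, i ≠ i₀ → i ∈ range e) : x i₀ * infProd (x ∘ e) ≤ infProd x := by
  classical
  refine le_iInf fun S => ?_
  have hrest : infProd (x ∘ e) ≤ ∏ i ∈ S.erase i₀, x i :=
    infProd_comp_le_prod x he fun i hi => hrange i (Finset.ne_of_mem_erase hi)
  calc x i₀ * infProd (x ∘ e) ≤ x i₀ * ∏ i ∈ S.erase i₀, x i := mul_le_mul_right hrest _
    _ ≤ ∏ i ∈ S, x i := by
      by_cases h : i₀ ∈ S
      · rw [Finset.mul_prod_erase S x h]
      · rw [Finset.erase_eq_of_notMem h]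
        exact mul_le_right

theorem infProd_eq_zero_of_infinite (x : ι → I) {c : I} (hc : c < 1)
    (hinf : {i | x i ≤ c}.Infinite) : infProd x = 0 := by
  have hpow (m : ℕ) : (infProd x : ℝ) ≤ (c : ℝ) ^ m := by
    obtain ⟨T, hT, rfl⟩ := hinf.exists_subset_card_eq m
    rw [← Set.Icc.coe_pow, ← Finset.prod_const, Subtype.coe_le_coe]
    exact (infProd_le_prod x T).trans (Finset.prod_le_prod' fun i hi => hT hi)
  have hlim := tendsto_pow_atTop_nhds_zero_of_lt_one c.2.1 (coe_lt_one.mpr hc)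
  exact Subtype.ext (le_antisymm (ge_of_tendsto' hlim hpow) (infProd x).2.1)

def natWeight (n : ℕ) : I :=
  ⟨n / (n + 2), by positivity, div_le_one_of_le₀ (by linarith) (by positivity)⟩

theorem natWeight_lt_one (n : ℕ) : natWeight n < 1 :=
  Subtype.coe_lt_coe.mp ((div_lt_one (by positivity)).mpr (by linarith))

theorem exists_lt_natWeight_mul {a b : I} (h : b < a) : ∃ n, b < natWeight n * a := by
  have hlim : Tendsto (fun n : ℕ => (n : ℝ) / (n + 2) * a) atTop (𝓝 (1 * a)) :=
    (tendsto_natCast_div_add_atTop (2 : ℝ)).mul_const _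
  rw [one_mul] at hlim
  exact (hlim.eventually (lt_mem_nhds (Subtype.coe_lt_coe.mpr h))).exists

end unitInterval

theorem exists_infinite_preimage_singleton {α β : Type*} [Uncountable α] [Countable β]
    (f : α → β) : ∃ b, (f ⁻¹' {b}).Infinite := by
  by_contra! h
  refine not_countable_univ (α := α) ?_
  rw [← preimage_univ (f := f), ← iUnion_of_singleton β, preimage_iUnion]
  exact countable_iUnion fun b => (h b).countable

theorem exists_forall_lt_of_isSuccLimit {α : Type*} [LinearOrder α] [SuccOrder α] {b : α}
    (hb : Order.IsSuccLimit b) (S : Finset (Iio b)) : ∃ a : Iio b, ∀ x ∈ S, x.1 < a.1 := by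
  obtain ⟨c, hc⟩ := not_isMin_iff.mp hb.not_isMin
  have : Nonempty (Iio b) := ⟨⟨c, hc⟩⟩
  obtain ⟨M, hM⟩ := S.exists_le
  exact ⟨⟨Order.succ M.1, hb.succ_lt M.2⟩, fun x hx =>
    (show x.1 ≤ M.1 from hM x hx).trans_lt (Order.lt_succ_of_not_isMax M.2.not_isMax)⟩

-- `Cardinal.toNat ξ.card` is `n` on the finite ordinal `n` and `0` on every infinite ordinal.
def ordWeight (ξ : Ordinal) : I := natWeight (Cardinal.toNat ξ.card)

theorem ordWeight_natCast (n : ℕ) : ordWeight n = natWeight n := by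
  simp [ordWeight]

section Tree

variable {o β : Ordinal}

def weightProd (f : Iio β → Iio o) : I := infProd fun δ => ordWeight (f δ)

theorem weightProd_resFn {α : Ordinal} (h : α ≤ β) (f : Iio β → Iio o) :
    weightProd (resFn h f) =
      infProd ((fun δ => ordWeight (f δ)) ∘ inclusion (Iio_subset_Iio h)) :=
  rfl

def extendFn (f : Iio β → Iio o) (ξ : Iio o) : Iio (β + 1) → Iio o :=
  fun δ => if h : δ.1 < β then f ⟨δ, h⟩ else ξ

theorem resFn_extendFn (f : Iio β → Iio o) (ξ : Iio o) :
    resFn le_self_add (extendFn f ξ) = f := by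
  funext δ
  exact dif_pos δ.2

theorem extendFn_apply_self (f : Iio β → Iio o) (ξ : Iio o) (hβ : β ∈ Iio (β + 1)) :
    extendFn f ξ ⟨β, hβ⟩ = ξ :=
  dif_neg (lt_irrefl β)

theorem weightProd_emptyFn : weightProd (emptyFn o) = 1 :=
  have : IsEmpty (Iio (0 : Ordinal)) := ⟨fun δ => (zero_le (a := δ.1)).not_gt δ.2⟩
  infProd_of_isEmpty _

theorem iInf_weightProd_resFn (hβ : Order.IsSuccLimit β) (f : Iio β → Iio o) :
    ⨅ α : Iio β, weightProd (resFn (le_of_lt α.2) f) = weightProd f := by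
  refine iInf_infProd_comp (fun δ => ordWeight (f δ))
    (e := fun α => inclusion (Iio_subset_Iio (le_of_lt α.2))) (fun α => inclusion_injective _)
    fun S => ?_
  obtain ⟨α, hα⟩ := exists_forall_lt_of_isSuccLimit hβ S
  exact ⟨α, fun δ hδ => ⟨⟨δ, hα δ hδ⟩, rfl⟩⟩

theorem ordWeight_mul_weightProd_le (f : Iio β → Iio o) (ξ : Iio o) :
    ordWeight ξ * weightProd f ≤ weightProd (extendFn f ξ) := by
  have hβ : β ∈ Iio (β + 1) := mem_Iio.mpr (Order.lt_add_one_iff.mpr le_rfl)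
  have key := mul_infProd_comp_le (i₀ := ⟨β, hβ⟩) (fun δ => ordWeight (extendFn f ξ δ))
    (inclusion_injective (Iio_subset_Iio le_self_add)) fun δ hδ =>
      ⟨⟨δ, (Order.lt_add_one_iff.mp δ.2).lt_of_ne fun h => hδ (Subtype.ext h)⟩, rfl⟩
  rwa [← weightProd_resFn le_self_add, resFn_extendFn, extendFn_apply_self] at key

theorem weightProd_le_iSup_extendFn (ho : Ordinal.omega0 ≤ o) (f : Iio β → Iio o) :
    weightProd f ≤ ⨆ ξ : Iio o, weightProd (extendFn f ξ) := by
  refine le_of_forall_lt fun b hb => ?_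
  obtain ⟨n, hn⟩ := exists_lt_natWeight_mul hb
  let ξ : Iio o := ⟨n, (Ordinal.natCast_lt_omega0 n).trans_le ho⟩
  refine lt_iSup_iff.mpr ⟨ξ, hn.trans_le ?_⟩
  rw [← ordWeight_natCast]
  exact ordWeight_mul_weightProd_le f ξ

end Tree

theorem omega0_le_omega1 : Ordinal.omega0 ≤ omega1 := by
  rw [omega1, ← Cardinal.ord_aleph0]
  exact Cardinal.ord_le_ord.mpr (Cardinal.aleph0_le_aleph 1)

theorem isSuccLimit_omega1 : Order.IsSuccLimit omega1 :=
  Cardinal.isSuccLimit_ord (Cardinal.aleph0_le_aleph 1)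

instance : Uncountable (Iio omega1) := by
  rw [← Cardinal.aleph0_lt_mk_iff, Cardinal.mk_Iio_ordinal, omega1, Cardinal.card_ord]
  simp

theorem weightProd_eq_zero_of_omega1 {o : Ordinal} (f : Iio omega1 → Iio o) :
    weightProd f = 0 := by
  obtain ⟨n, hn⟩ := exists_infinite_preimage_singleton fun δ => Cardinal.toNat (f δ).1.card
  exact infProd_eq_zero_of_infinite _ (natWeight_lt_one n)
    (hn.mono fun δ hδ => (congrArg natWeight hδ).le)

/-- The complete lattice `[0,1]` does not satisfy the transfinite distributivity law at
`γ = ω₁`: there is a tree-indexed family of elements of `[0,1]` satisfying the two premises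
of the law but not its conclusion. -/
theorem unitInterval_transfinite_distrib_fails_at_omega1 :
    ∃ a : (β : Set.Iio omega1) → (Set.Iio β.1 → Set.Iio omega1) → ↥(Set.Icc (0:ℝ) 1),
      (∀ (β : Ordinal) (hβ : β + 1 < omega1) (f : Set.Iio β → Set.Iio omega1),
          a ⟨β, Set.mem_Iio.mpr (lt_of_le_of_lt (le_self_add : β ≤ β + 1) hβ)⟩ f ≤
            ⨆ g : {g : Set.Iio (β + 1) → Set.Iio omega1 //
                    resFn (le_self_add : β ≤ β + 1) g = f},
              a ⟨β + 1, Set.mem_Iio.mpr hβ⟩ g.1) ∧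
      (∀ (β : Set.Iio omega1), Order.IsSuccLimit β.1 → ∀ f : Set.Iio β.1 → Set.Iio omega1,
          a β f = ⨅ α : Set.Iio β.1,
            a ⟨α.1, Set.mem_Iio.mpr (lt_trans α.2 β.2)⟩ (resFn (le_of_lt α.2) f)) ∧
      ¬ (a ⟨0, Set.mem_Iio.mpr omega1_pos⟩ (emptyFn omega1) ≤
          ⨆ f : Set.Iio omega1 → Set.Iio omega1,
            ⨅ β : Set.Iio omega1, a β (resFn (le_of_lt β.2) f)) := by
  refine ⟨fun _ f => weightProd f, fun β _ f => ?_, fun β hβ f => (iInf_weightProd_resFn hβ f).symm,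
    ?_⟩
  · exact (weightProd_le_iSup_extendFn omega0_le_omega1 f).trans
      (iSup_le fun ξ => le_iSup_of_le ⟨extendFn f ξ, resFn_extendFn f ξ⟩ le_rfl)
  · simp only [weightProd_emptyFn, iInf_weightProd_resFn isSuccLimit_omega1,
      weightProd_eq_zero_of_omega1, iSup_const, not_le]
    exact zero_lt_one
end
end

section
/- Let γ be an ordinal and let D be a contravariant functor on the ordinals β ≤ γ: sets D_β with maps p_{β,α} : D_β → D_α for α ≤ β ≤ γ, functorial in α ≤ β. Suppose that p_{β+1,β} : D_{β+1} → D_β is surjective for every β < γ, and that for every limit ordinal β ≤ γ the maps p_{β,α} (α < β) exhibit D_β as the inverse limit of the D_α, i.e., the induced map from D_β to the set of compatible families (x_α)_{α<β} is a bijection. Then the projection p_{γ,0} : D_γ → D_0 is surjective; that is, the transfinite composite of surjections of sets along a continuous ordinal-indexed chain is surjective. -/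
/-!
Order the pairs `(β, y)` with `y ∈ D β` by restriction. A nonempty chain of such pairs is bounded:
either its stages have a largest element, or their supremum is a limit ordinal, and the chain
then defines a compatible family below it, which the inverse-limit property glues to a single
element. By Zorn's lemma some maximal pair lies above `(0, x)`, and surjectivity of the successor
maps forces its stage to be `γ`.
-/

universe u

open Order Set

namespace InverseSystem

variable {ι : Type*} {F : ι → Type*}

structure Elements [Preorder ι] (f : ∀ ⦃i j : ι⦄, i ≤ j → F j → F i) where
  index : ι
  val : F index

section Preorder

variable [Preorder ι] {f : ∀ ⦃i j : ι⦄, i ≤ j → F j → F i} [InverseSystem f]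

instance : Preorder (Elements f) where
  le a b := ∃ h : a.index ≤ b.index, f h b.val = a.val
  le_refl a := ⟨le_rfl, map_self a.val⟩
  le_trans _ _ _ := fun ⟨hab, eab⟩ ⟨hbc, ebc⟩ =>
    ⟨hab.trans hbc, by rw [← map_map (f := f) hab hbc, ebc, eab]⟩

namespace Elements

theorem map_eq_of_le {a b : Elements f} (hab : a ≤ b) {k : ι} (hk : k ≤ a.index) :
    f hk a.val = f (hk.trans hab.1) b.val := by
  rw [← map_map (f := f) hk hab.1, hab.2]

theorem map_eq_of_isChain {c : Set (Elements f)} (hc : IsChain (· ≤ ·) c) {a b : Elements f}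
    (ha : a ∈ c) (hb : b ∈ c) {k : ι} (hka : k ≤ a.index) (hkb : k ≤ b.index) :
    f hka a.val = f hkb b.val := by
  rcases hc.total ha hb with hab | hba
  · exact map_eq_of_le hab hka
  · exact (map_eq_of_le hba hkb).symm

theorem le_of_isChain_of_forall_le {c : Set (Elements f)} (hc : IsChain (· ≤ ·) c)
    {a : Elements f} (ha : a ∈ c) (hmax : ∀ b ∈ c, b.index ≤ a.index) {b : Elements f}
    (hb : b ∈ c) : b ≤ a :=
  ⟨hmax b hb, by rw [map_eq_of_isChain hc ha hb (hmax b hb) le_rfl, map_self (f := f)]⟩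

theorem exists_forall_le_of_isChain {c : Set (Elements f)} (hc : IsChain (· ≤ ·) c) {i : ι}
    (hlt : ∀ b ∈ c, b.index < i) (hcofinal : ∀ k < i, ∃ b ∈ c, k ≤ b.index)
    (hlim : ∀ u ∈ limit f i, ∃ x : F i, ∀ l, f l.2.le x = u l) :
    ∃ x : F i, ∀ b ∈ c, b ≤ ⟨i, x⟩ := by
  choose g hgc hkg using hcofinal
  obtain ⟨x, hx⟩ := hlim (fun l => f (hkg l (mem_Iio.mp l.2)) (g l (mem_Iio.mp l.2)).val)
    fun j k h => by
      dsimp only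
      rw [map_map (f := f)]
      exact map_eq_of_isChain hc (hgc _ _) (hgc _ _) _ _
  refine ⟨x, fun b hb => ⟨(hlt b hb).le, ?_⟩⟩
  rw [hx ⟨b.index, mem_Iio.mpr (hlt b hb)⟩, map_eq_of_isChain hc (hgc _ _) hb _ le_rfl,
    map_self (f := f)]

theorem le_of_isMax {m : Elements f} (hm : IsMax m) {j : ι} (h : m.index ≤ j)
    (hf : Function.Surjective (f h)) : j ≤ m.index := by
  obtain ⟨y, hy⟩ := hf m.val
  exact (hm (b := ⟨j, y⟩) ⟨h, hy⟩).1

end Elements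

end Preorder

section Ordinal

variable {γ : Ordinal.{u}} {D : Iic γ → Type*} {f : ∀ ⦃i j : Iic γ⦄, i ≤ j → D j → D i}
  [InverseSystem f]

theorem Elements.bddAbove_of_isChain
    (hlim : ∀ i : Iic γ, IsSuccLimit i.1 → ∀ u ∈ limit f i, ∃ x : D i, ∀ l, f l.2.le x = u l)
    {c : Set (Elements f)} (hc : IsChain (· ≤ ·) c) (hne : c.Nonempty) : BddAbove c := by
  set s : Set Ordinal := (fun a => a.index.1) '' c
  have hγ : γ ∈ upperBounds s := by
    rintro _ ⟨a, -, rfl⟩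
    exact a.index.2
  have hs : BddAbove s := ⟨γ, hγ⟩
  by_cases hmem : sSup s ∈ s
  · obtain ⟨a, ha, hsup⟩ := hmem
    exact ⟨a, fun b hb => le_of_isChain_of_forall_le hc ha
      (fun b hb => (le_csSup hs (mem_image_of_mem _ hb)).trans_eq hsup.symm) hb⟩
  · let δ : Iic γ := ⟨sSup s, csSup_le' hγ⟩
    have hlt : ∀ b ∈ c, b.index < δ := fun b hb =>
      (le_csSup hs (mem_image_of_mem _ hb)).lt_of_ne fun h => hmem (h ▸ mem_image_of_mem _ hb)
    have hcofinal : ∀ k < δ, ∃ b ∈ c, k ≤ b.index := fun k hk => by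
      obtain ⟨_, ⟨b, hb, rfl⟩, hkb⟩ :=
        exists_lt_of_lt_csSup (hne.image _) (Subtype.coe_lt_coe.mpr hk)
      exact ⟨b, hb, hkb.le⟩
    have hδ : IsSuccLimit δ.1 :=
      not_imp_comm.mp (csSup_mem_of_not_isSuccLimit (hne.image _) hs) hmem
    obtain ⟨x, hx⟩ := exists_forall_le_of_isChain hc hlt hcofinal (hlim δ hδ)
    exact ⟨_, hx⟩

theorem Elements.exists_le_mk_top
    (hsucc : ∀ (β : Ordinal) (hβ : β < γ), Function.Surjective
      (f (i := ⟨β, hβ.le⟩) (j := ⟨β + 1, add_one_le_iff.mpr hβ⟩) (le_self_add (a := β) (b := 1))))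
    (hlim : ∀ i : Iic γ, IsSuccLimit i.1 → ∀ u ∈ limit f i, ∃ x : D i, ∀ l, f l.2.le x = u l)
    (a : Elements f) : ∃ y : D ⟨γ, right_mem_Iic⟩, a ≤ ⟨⟨γ, right_mem_Iic⟩, y⟩ := by
  obtain ⟨⟨⟨β, hβγ⟩, y⟩, hay, hmax⟩ := zorn_le_nonempty_Ici₀ a
    (fun c _ hc b hb => bddAbove_of_isChain hlim hc ⟨b, hb⟩) a le_rfl
  obtain rfl : β = γ := by
    by_contra hne
    have hlt : β < γ := hβγ.lt_of_ne hne
    have hsucc_le : β + 1 ≤ β := le_of_isMax hmax (j := ⟨β + 1, add_one_le_iff.mpr hlt⟩)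
      (le_self_add (a := β) (b := 1)) (hsucc β hlt)
    exact (lt_add_one_iff.mpr le_rfl).not_ge hsucc_le
  exact ⟨y, hay⟩

end Ordinal

end InverseSystem

/-- The transfinite composite of surjections of sets along a continuous ordinal-indexed
inverse chain is surjective: if `D` is a contravariant functor on the ordinals `β ≤ γ` such
that each successor map `D (β+1) → D β` is surjective and at each limit ordinal `β ≤ γ` the
set `D β` is the inverse limit of its predecessors, then the projection `D γ → D 0` is
surjective. -/
theorem transfinite_composite_of_surjections_surjective (γ : Ordinal.{u})
    (D : Set.Iic γ → Type u)
    (p : ∀ (β₁ β₂ : Set.Iic γ), β₁.1 ≤ β₂.1 → D β₂ → D β₁)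
    (hid : ∀ (β : Set.Iic γ) (x : D β), p β β le_rfl x = x)
    (hcomp : ∀ (β₁ β₂ β₃ : Set.Iic γ) (h12 : β₁.1 ≤ β₂.1) (h23 : β₂.1 ≤ β₃.1) (x : D β₃),
      p β₁ β₂ h12 (p β₂ β₃ h23 x) = p β₁ β₃ (h12.trans h23) x)
    (hsucc : ∀ (β : Ordinal) (hβ : β < γ),
      Function.Surjective
        (p ⟨β, Set.mem_Iic.mpr (le_of_lt hβ)⟩
           ⟨β + 1, Set.mem_Iic.mpr (Order.add_one_le_iff.mpr hβ)⟩
           (le_self_add (a := β) (b := 1))))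
    (hlim : ∀ (β : Set.Iic γ), Order.IsSuccLimit β.1 →
      ∀ u : (α : Set.Iio β.1) → D ⟨α.1, Set.mem_Iic.mpr (le_of_lt (lt_of_lt_of_le α.2 β.2))⟩,
        (∀ (α₁ α₂ : Set.Iio β.1) (h12 : α₁.1 ≤ α₂.1),
          p ⟨α₁.1, Set.mem_Iic.mpr (le_of_lt (lt_of_lt_of_le α₁.2 β.2))⟩
            ⟨α₂.1, Set.mem_Iic.mpr (le_of_lt (lt_of_lt_of_le α₂.2 β.2))⟩
            h12 (u α₂) = u α₁) →
        ∃! x : D β, ∀ α : Set.Iio β.1,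
          p ⟨α.1, Set.mem_Iic.mpr (le_of_lt (lt_of_lt_of_le α.2 β.2))⟩ β
            (le_of_lt α.2) x = u α) :
    Function.Surjective
      (p ⟨0, Set.mem_Iic.mpr (zero_le (a := γ))⟩ ⟨γ, Set.mem_Iic.mpr le_rfl⟩
        (zero_le (a := γ))) := by
  let f : ∀ ⦃i j : Iic γ⦄, i ≤ j → D j → D i := fun i j h => p i j h
  have : InverseSystem f := ⟨hid, fun _ _ _ => hcomp _ _ _⟩
  have hlim' : ∀ i : Iic γ, IsSuccLimit i.1 → ∀ u ∈ InverseSystem.limit f i,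
      ∃ x : D i, ∀ l, f l.2.le x = u l := by
    intro i hi u hu
    obtain ⟨x, hx, -⟩ := hlim i hi (fun α => u ⟨⟨α.1, _⟩, α.2⟩) fun α₁ α₂ h =>
      hu (j := ⟨⟨α₁.1, _⟩, α₁.2⟩) (k := ⟨⟨α₂.1, _⟩, α₂.2⟩) h
    exact ⟨x, fun l => hx ⟨l.1.1, l.2⟩⟩
  intro x
  obtain ⟨y, hxy⟩ := InverseSystem.Elements.exists_le_mk_top hsucc hlim' ⟨⟨0, _⟩, x⟩
  exact ⟨y, hxy.2⟩
end

section
/- Let P and M be small categories and E : P ⥤ M a functor such that (a) E is surjective on objects, and (b) for every object p of P and every morphism t : E(p) → r in M there exist an object q of P and a morphism l : p → q in P with E(q) = r and E(l) = t. Then the precomposition functor E* : (M ⥤ Type) ⥤ (P ⥤ Type), sending F to F ∘ E, satisfies: (i) E* reflects isomorphisms (it is conservative); and (ii) E* preserves universal quantification of subfunctors: for all functors F, G : M ⥤ Type, every natural transformation f : F ⟶ G, and every subfunctor A of F (a choice of subsets A(m) ⊆ F(m) for each object m, stable under the action of F on morphisms), defining the subfunctor ∀_f A of G by (∀_f A)(m)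 = { y ∈ G(m) : for every morphism t : m → r of M and every x ∈ F(r), if f_r(x) = G(t)(y) then x ∈ A(r) }, one has, for every object p of P, (∀_{E*f}(E*A))(p) = (∀_f A)(E(p)) as subsets of G(E(p)), where E*A is the subfunctor of F ∘ E given by (E*A)(p) = A(E(p)) and E*f is the whiskered natural transformation F ∘ E ⟶ G ∘ E. -/
universe u

open CategoryTheory

/-- The universal quantification of a subfunctor `A ⊆ F` along a natural transformation
`f : F ⟶ G` of `Type`-valued functors: `(∀_f A)(c) = { y ∈ G c | ∀ t : c ⟶ r, ∀ x ∈ F r,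
f_r x = G t y → x ∈ A r }`. -/
def forallSub {C : Type u} [Category.{u} C] {F G : C ⥤ Type u} (f : F ⟶ G)
    (A : ∀ c : C, Set (F.obj c)) (c : C) : Set (G.obj c) :=
  {y | ∀ (r : C) (t : c ⟶ r) (x : F.obj r), f.app r x = G.map t y → x ∈ A r}

theorem isIso_of_isIso_whiskerLeft_of_surjective {C D K : Type*} [Category C] [Category D]
    [Category K] (E : C ⥤ D) (hobj : Function.Surjective E.obj) {F G : D ⥤ K} (f : F ⟶ G)
    [IsIso (Functor.whiskerLeft E f)] : IsIso f := by
  have hcomp (d : D) : IsIso (f.app d) := by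
    obtain ⟨c, rfl⟩ := hobj d
    exact NatIso.isIso_app_of_isIso (Functor.whiskerLeft E f) c
  exact NatIso.isIso_of_isIso_app f

section forallSub

variable {P M : Type u} [SmallCategory P] [SmallCategory M] (E : P ⥤ M)
  {F G : M ⥤ Type u} (f : F ⟶ G) (A : ∀ m : M, Set (F.obj m))

theorem forallSub_subset_forallSub_whiskerLeft (p : P) :
    forallSub f A (E.obj p) ⊆ forallSub (Functor.whiskerLeft E f) (fun q => A (E.obj q)) p :=
  fun _ hy q l x hx => hy (E.obj q) (E.map l) x hx

theorem forallSub_whiskerLeft_of_lift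
    (hmor : ∀ (p : P) (r : M) (t : E.obj p ⟶ r),
      ∃ (q : P) (l : p ⟶ q) (hq : E.obj q = r), E.map l ≫ eqToHom hq = t) (p : P) :
    forallSub (Functor.whiskerLeft E f) (fun q => A (E.obj q)) p = forallSub f A (E.obj p) := by
  refine subset_antisymm (fun y hy r t x hx => ?_) (forallSub_subset_forallSub_whiskerLeft E f A p)
  obtain ⟨q, l, rfl, rfl⟩ := hmor p r t
  simp only [eqToHom_refl, Category.comp_id] at hx
  exact hy q l x hx

end forallSub

/-- If `E : P ⥤ M` is surjective on objects and every morphism out of an object in the image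
of `E` lifts to `P`, then precomposition with `E` is conservative and preserves universal
quantification of subfunctors. -/
theorem precomposition_conservative_and_preserves_forall
    (P M : Type u) [SmallCategory P] [SmallCategory M] (E : P ⥤ M)
    (hobj : Function.Surjective E.obj)
    (hmor : ∀ (p : P) (r : M) (t : E.obj p ⟶ r),
      ∃ (q : P) (l : p ⟶ q) (hq : E.obj q = r), E.map l ≫ eqToHom hq = t) :
    (∀ {F G : M ⥤ Type u} (f : F ⟶ G), IsIso (Functor.whiskerLeft E f) → IsIso f) ∧
    (∀ (F G : M ⥤ Type u) (f : F ⟶ G) (A : ∀ m : M, Set (F.obj m)),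
      (∀ (m m' : M) (t : m ⟶ m'), ∀ x ∈ A m, F.map t x ∈ A m') →
      ∀ p : P,
        forallSub (Functor.whiskerLeft E f) (fun q => A (E.obj q)) p = forallSub f A (E.obj p)) :=
  ⟨fun f _ => isIso_of_isIso_whiskerLeft_of_surjective E hobj f,
    fun _ _ f A _ => forallSub_whiskerLeft_of_lift E f A hmor⟩
end
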